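/- Let f be a probability measure on ℝ^d × ℝ^d and for each i = 1,…,N let π_i be a Markov kernel in the velocity variable, λ_i ∈ [0,1] with Σλ_i = 1 and Σλ_i π_i a martingale kernel. Set t_0 = 0, t_i = Σ_{j≤i} λ_j. Suppose X_i : ℝ^d × ℝ^d × 𝕋¹ → ℝ^d are jointly measurable with ∫_{𝕋¹} δ_{X_i(x,v,θ)} dθ = π_i(x,v). Define for each (x₀,v₀,θ) the curve γ with constant position x₀, γ_v(0) = 0, and velocity derivative γ̇_v(s) = X_i(x₀,v₀, (s−t_i)/(t_{i+1}−t_i) + θ) for s ∈ (t_i, t_{i+1}). Then γ_v(1) = v₀ for every (x₀,v₀,θ), i.e. the constructed vertical tangent path returns to the original velocity. -/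

import Mathlib

/-!
On the `i`-th subinterval, of length `λᵢ`, the velocity derivative runs once around the circle
`θ' ↦ Xᵢ(x₀, v₀, θ')`, so its integral there is `λᵢ` times the circle average of `Xᵢ(x₀, v₀, ·)`
(rescaling, then translation invariance of the Haar measure). Since `Xᵢ(x₀, v₀, ·)` has law
`πᵢ(x₀, v₀)`, that average is the mean of `πᵢ(x₀, v₀)`, and the martingale property of
`∑ λᵢ πᵢ` sums these contributions to `v₀`.
-/

open MeasureTheory

variable {E : Type*} [NormedAddCommGroup E] [NormedSpace ℝ E]

theorem AddCircle.intervalIntegral_comp_sub_div (g : AddCircle (1 : ℝ) → E) (t ℓ : ℝ) :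
    ∫ s in t..t + ℓ, g (((s - t) / ℓ : ℝ) : AddCircle (1 : ℝ)) = ℓ • ∫ a, g a := by
  rcases eq_or_ne ℓ 0 with rfl | hℓ
  · simp
  have hrescale := intervalIntegral.integral_comp_div_sub
    (fun u : ℝ => g (u : AddCircle (1 : ℝ))) (a := t) (b := t + ℓ) hℓ (t / ℓ)
  rw [sub_self, show (t + ℓ) / ℓ - t / ℓ = 1 by field_simp; ring] at hrescale
  have hperiod : ∫ u in (0 : ℝ)..1, g (u : AddCircle (1 : ℝ)) = ∫ a, g a := by
    simpa [intervalIntegral.integral_of_le zero_le_one] using AddCircle.integral_preimage 1 0 g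
  simp_rw [sub_div]
  rw [hrescale, hperiod]

theorem AddCircle.intervalIntegral_comp_sub_div_add [MeasurableSpace E] [BorelSpace E]
    [SecondCountableTopology E] {Y : AddCircle (1 : ℝ) → E} (hY : Measurable Y)
    (θ : AddCircle (1 : ℝ)) (t ℓ : ℝ) :
    ∫ s in t..t + ℓ, Y ((((s - t) / ℓ : ℝ) : AddCircle (1 : ℝ)) + θ) =
      ℓ • ∫ v, v ∂(volume.map Y) := by
  rw [AddCircle.intervalIntegral_comp_sub_div (fun a => Y (a + θ)),
    integral_add_right_eq_self Y θ,
    integral_map (f := fun v => v) hY.aemeasurable aestronglyMeasurable_id]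

theorem stmt19_general (d N : ℕ)
    (π : ℕ → EuclideanSpace ℝ (Fin d) × EuclideanSpace ℝ (Fin d) →
      Measure (EuclideanSpace ℝ (Fin d)))
    (l : ℕ → ℝ)
    -- Σ λ_i π_i is a martingale kernel
    (hmart : ∀ q : EuclideanSpace ℝ (Fin d) × EuclideanSpace ℝ (Fin d),
      ∑ i ∈ Finset.range N, l i • (∫ v', v' ∂(π i q)) = q.2)
    (X : ℕ → EuclideanSpace ℝ (Fin d) × EuclideanSpace ℝ (Fin d) →
      AddCircle (1 : ℝ) → EuclideanSpace ℝ (Fin d))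
    (hXmeas : ∀ i, Measurable
      (fun w : (EuclideanSpace ℝ (Fin d) × EuclideanSpace ℝ (Fin d)) × AddCircle (1 : ℝ) =>
        X i w.1 w.2))
    -- X_i(x,v,·) is distributed according to π_i(x,v) under the Haar measure on 𝕋¹
    (hXdist : ∀ i q, (volume : Measure (AddCircle (1 : ℝ))).map (X i q) = π i q)
    (q : EuclideanSpace ℝ (Fin d) × EuclideanSpace ℝ (Fin d))
    (θ : AddCircle (1 : ℝ)) :
    ∑ i ∈ Finset.range N,
      (∫ s in (∑ j ∈ Finset.range i, l j)..(∑ j ∈ Finset.range (i + 1), l j),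
        X i q ((((s - ∑ j ∈ Finset.range i, l j) / l i : ℝ) : AddCircle (1 : ℝ)) + θ)) =
      q.2 := by
  rw [← hmart q]
  refine Finset.sum_congr rfl fun i _ => ?_
  have hXiq : Measurable (X i q) := (hXmeas i).comp (measurable_const.prodMk measurable_id)
  rw [Finset.sum_range_succ, AddCircle.intervalIntegral_comp_sub_div_add hXiq, hXdist]

/-- The vertical tangent path constructed from random variables realizing the kernels
`π_i` on consecutive subintervals of lengths `λ_i` returns to the original velocity:
the total integral of its velocity derivative equals `v₀`. -/
theorem stmt19 (d N : ℕ)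
    (π : ℕ → EuclideanSpace ℝ (Fin d) × EuclideanSpace ℝ (Fin d) →
      Measure (EuclideanSpace ℝ (Fin d)))
    (hπprob : ∀ i q, IsProbabilityMeasure (π i q))
    (l : ℕ → ℝ) (hl0 : ∀ i, 0 ≤ l i) (hl1 : ∑ i ∈ Finset.range N, l i = 1)
    -- Σ λ_i π_i is a martingale kernel
    (hmart : ∀ q : EuclideanSpace ℝ (Fin d) × EuclideanSpace ℝ (Fin d),
      ∑ i ∈ Finset.range N, l i • (∫ v', v' ∂(π i q)) = q.2)
    (X : ℕ → EuclideanSpace ℝ (Fin d) × EuclideanSpace ℝ (Fin d) →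
      AddCircle (1 : ℝ) → EuclideanSpace ℝ (Fin d))
    (hXmeas : ∀ i, Measurable
      (fun w : (EuclideanSpace ℝ (Fin d) × EuclideanSpace ℝ (Fin d)) × AddCircle (1 : ℝ) =>
        X i w.1 w.2))
    (hXint : ∀ i q, Integrable (X i q) (volume : Measure (AddCircle (1 : ℝ))))
    -- X_i(x,v,·) is distributed according to π_i(x,v) under the Haar measure on 𝕋¹
    (hXdist : ∀ i q, (volume : Measure (AddCircle (1 : ℝ))).map (X i q) = π i q)
    (q : EuclideanSpace ℝ (Fin d) × EuclideanSpace ℝ (Fin d))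
    (θ : AddCircle (1 : ℝ)) :
    ∑ i ∈ Finset.range N,
      (∫ s in (∑ j ∈ Finset.range i, l j)..(∑ j ∈ Finset.range (i + 1), l j),
        X i q ((((s - ∑ j ∈ Finset.range i, l j) / l i : ℝ) : AddCircle (1 : ℝ)) + θ)) =
      q.2 :=
  stmt19_general d N π l hmart X hXmeas hXdist q θ
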